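/- Let (X,d) be an unbounded metric space and p ∈ X. If the family 𝔉_n(X) of all pretangent spaces with normal scaling sequences is uniformly bounded, then every pretangent space Ω_{∞,r̃}^X (for an arbitrary scaling sequence r̃) is bounded. -/

import Mathlib

open Filter Topology

/-- A scaling sequence: a sequence of positive reals tending to infinity. -/
def ScalingSeq (r : ℕ → ℝ) : Prop :=
  (∀ n, 0 < r n) ∧ Tendsto r atTop atTop

/-- `x ∈ X̃_{∞,r̃}`: the sequence `x` satisfies `d(x_n,p) → ∞` and the finite limit
`d̃_r̃(x̃) = lim d(x_n,p)/r_n` exists.  Here `d` is the distance function of the space. -/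
def SeqAdm {Y : Type*} (d : Y → Y → ℝ) (p : Y) (r : ℕ → ℝ) (x : ℕ → Y) : Prop :=
  Tendsto (fun n => d (x n) p) atTop atTop ∧
  ∃ L : ℝ, Tendsto (fun n => d (x n) p / r n) atTop (𝓝 L)

/-- The equivalence `x̃ ≡ ỹ ⇔ lim d(x_n,y_n)/r_n = 0`. -/
def SeqEquiv {Y : Type*} (d : Y → Y → ℝ) (r : ℕ → ℝ) (x y : ℕ → Y) : Prop :=
  Tendsto (fun n => d (x n) (y n) / r n) atTop (𝓝 0)

/-- Mutual stability: the limit `lim d(x_n,y_n)/r_n` exists (and is finite). -/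
def MutStable {Y : Type*} (d : Y → Y → ℝ) (r : ℕ → ℝ) (x y : ℕ → Y) : Prop :=
  ∃ L : ℝ, Tendsto (fun n => d (x n) (y n) / r n) atTop (𝓝 L)

/-- A set of sequences representing a clique in the graph `G_{X,r̃}`: all members are
admissible, the set is a union of equivalence classes, and all members are pairwise
mutually stable. -/
def IsCliqueSet {Y : Type*} (d : Y → Y → ℝ) (p : Y) (r : ℕ → ℝ) (C : Set (ℕ → Y)) : Prop :=
  (∀ x ∈ C, SeqAdm d p r x) ∧
  (∀ x ∈ C, ∀ y, SeqAdm d p r y → SeqEquiv d r x y → y ∈ C) ∧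
  (∀ x ∈ C, ∀ y ∈ C, MutStable d r x y)

/-- A pretangent space `Ω^X_{∞,r̃}`, encoded as the (union of the) maximal clique of the
graph `G_{X,r̃}`. -/
def IsPretangent {Y : Type*} (d : Y → Y → ℝ) (p : Y) (r : ℕ → ℝ) (C : Set (ℕ → Y)) : Prop :=
  IsCliqueSet d p r C ∧ ∀ D, IsCliqueSet d p r D → C ⊆ D → D = C

/-- The point `α₀ = α₀(X,r̃)`: the class of admissible sequences with `d̃_r̃(x̃) = 0`. -/
def alphaZero {Y : Type*} (d : Y → Y → ℝ) (p : Y) (r : ℕ → ℝ) : Set (ℕ → Y) :=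
  {x | SeqAdm d p r x ∧ Tendsto (fun n => d (x n) p / r n) atTop (𝓝 0)}

/-- The metric `ρ` of a pretangent space: `ρ(α,β) = lim d(x_n,y_n)/r_n`. -/
noncomputable def seqDist {Y : Type*} (d : Y → Y → ℝ) (r : ℕ → ℝ) (x y : ℕ → Y) : ℝ :=
  limUnder atTop (fun n => d (x n) (y n) / r n)

/-- A sequence of reals is eventually increasing if `τ_{n+1} ≥ τ_n` for all
sufficiently large `n`. -/
def EventuallyIncr (τ : ℕ → ℝ) : Prop :=
  ∃ N : ℕ, ∀ n ≥ N, τ n ≤ τ (n + 1)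

/-- A scaling sequence `r̃` is normal if it is eventually increasing and there is
`x̃ ∈ X̃_{∞,r̃}` with `lim d(xₙ,p)/rₙ = 1`. -/
def NormalScaling {Y : Type*} (d : Y → Y → ℝ) (p : Y) (r : ℕ → ℝ) : Prop :=
  ScalingSeq r ∧ EventuallyIncr r ∧
  ∃ x : ℕ → Y, SeqAdm d p r x ∧ Tendsto (fun n => d (x n) p / r n) atTop (𝓝 1)

/-!
Suppose a pretangent space `Ω` for a scaling sequence `r` is unbounded. Since
`ρ(α, β) ≤ d̃(α) + d̃(β)`, it has points `α` with `d̃(α) = a > 0` and `β` far enough out that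
`c = ρ(α, β) ≥ d̃(β) - a > M a`. Pick `x ∈ α`; along a subsequence of record values of
`d(x_n, p)`, these distances form a normal scaling sequence `s`. Rescaled by `s`, the
subsequences of `α` and `β` are mutually stable at distance `c / a > M`, and any maximal clique
containing them is a pretangent space in `𝔉_n(X)` of diameter greater than `M`.
-/

theorem tendsto_div_of_tendsto_div_same_denom {α : Type*} {l : Filter α} {f g r : α → ℝ}
    {L a : ℝ} (hr : ∀ᶠ n in l, r n ≠ 0) (hf : Tendsto (fun n => f n / r n) l (𝓝 L))
    (hg : Tendsto (fun n => g n / r n) l (𝓝 a)) (ha : a ≠ 0) :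
    Tendsto (fun n => f n / g n) l (𝓝 (L / a)) :=
  (hf.div hg ha).congr' (hr.mono fun _ hn => div_div_div_cancel_right₀ hn _ _)

section

variable {Y : Type*} {d : Y → Y → ℝ} {p : Y} {r : ℕ → ℝ}

theorem isCliqueSet_sUnion {c : Set (Set (ℕ → Y))} (hc : ∀ D ∈ c, IsCliqueSet d p r D)
    (hchain : IsChain (· ⊆ ·) c) : IsCliqueSet d p r (⋃₀ c) := by
  refine ⟨?_, ?_, ?_⟩
  · rintro x ⟨D, hD, hxD⟩
    exact (hc D hD).1 x hxD
  · rintro x ⟨D, hD, hxD⟩ y hy hxy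
    exact ⟨D, hD, (hc D hD).2.1 x hxD y hy hxy⟩
  · rintro x ⟨D₁, hD₁, hxD₁⟩ y ⟨D₂, hD₂, hyD₂⟩
    rcases hchain.total hD₁ hD₂ with h | h
    · exact (hc D₂ hD₂).2.2 x (h hxD₁) y hyD₂
    · exact (hc D₁ hD₁).2.2 x hxD₁ y (h hyD₂)

theorem IsCliqueSet.exists_isPretangent_superset {C₀ : Set (ℕ → Y)}
    (h : IsCliqueSet d p r C₀) : ∃ C, IsPretangent d p r C ∧ C₀ ⊆ C := by
  obtain ⟨C, hC₀C, hmax⟩ := zorn_subset_nonempty {D | IsCliqueSet d p r D}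
    (fun c hc hchain _ => ⟨⋃₀ c, isCliqueSet_sUnion hc hchain,
      fun _ => Set.subset_sUnion_of_mem⟩) C₀ h
  exact ⟨C, ⟨hmax.1, fun D hD hCD => subset_antisymm (hmax.2 hD hCD) hCD⟩, hC₀C⟩

end

section

variable {X : Type*} [PseudoMetricSpace X] {r : ℕ → ℝ}

theorem SeqEquiv.refl (x : ℕ → X) : SeqEquiv dist r x x := by
  simp [SeqEquiv]

theorem SeqEquiv.symm {x y : ℕ → X} (h : SeqEquiv dist r x y) : SeqEquiv dist r y x := by
  simpa only [SeqEquiv, dist_comm] using h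

theorem SeqEquiv.trans (hr : ∀ n, 0 ≤ r n) {x y z : ℕ → X} (hxy : SeqEquiv dist r x y)
    (hyz : SeqEquiv dist r y z) : SeqEquiv dist r x z := by
  have hsum : Tendsto (fun n => dist (x n) (y n) / r n + dist (y n) (z n) / r n)
      atTop (𝓝 0) := by
    simpa using hxy.add hyz
  refine squeeze_zero (fun n => div_nonneg dist_nonneg (hr n)) (fun n => ?_) hsum
  rw [← add_div]
  exact div_le_div_of_nonneg_right (dist_triangle _ _ _) (hr n)

theorem SeqEquiv.tendsto_dist_div (hr : ∀ n, 0 ≤ r n) {x x' y y' : ℕ → X}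
    (hx : SeqEquiv dist r x x') (hy : SeqEquiv dist r y y') {L : ℝ}
    (h : Tendsto (fun n => dist (x n) (y n) / r n) atTop (𝓝 L)) :
    Tendsto (fun n => dist (x' n) (y' n) / r n) atTop (𝓝 L) := by
  have hsum : Tendsto (fun n => dist (x' n) (x n) / r n + dist (y' n) (y n) / r n)
      atTop (𝓝 0) := by
    simpa using hx.symm.add hy.symm
  have hdiff : Tendsto (fun n => dist (x' n) (y' n) / r n - dist (x n) (y n) / r n)
      atTop (𝓝 0) := by
    refine squeeze_zero_norm (fun n => ?_) hsum
    rw [← sub_div, ← add_div, norm_div, Real.norm_of_nonneg (hr n)]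
    exact div_le_div_of_nonneg_right (dist_dist_dist_le (x' n) (y' n) (x n) (y n)) (hr n)
  simpa using hdiff.add h

theorem MutStable.refl (x : ℕ → X) : MutStable dist r x x :=
  ⟨0, SeqEquiv.refl x⟩

theorem MutStable.symm {x y : ℕ → X} (h : MutStable dist r x y) : MutStable dist r y x := by
  simpa only [MutStable, dist_comm] using h

theorem MutStable.of_seqEquiv (hr : ∀ n, 0 ≤ r n) {x x' y y' : ℕ → X}
    (h : MutStable dist r x y) (hx : SeqEquiv dist r x x') (hy : SeqEquiv dist r y y') :
    MutStable dist r x' y' :=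
  let ⟨L, hL⟩ := h
  ⟨L, hx.tendsto_dist_div hr hy hL⟩

theorem le_add_of_tendsto_dist_div (hr : ∀ n, 0 ≤ r n) {x y z : ℕ → X} {a b c : ℝ}
    (hxy : Tendsto (fun n => dist (x n) (y n) / r n) atTop (𝓝 a))
    (hyz : Tendsto (fun n => dist (y n) (z n) / r n) atTop (𝓝 b))
    (hxz : Tendsto (fun n => dist (x n) (z n) / r n) atTop (𝓝 c)) :
    c ≤ a + b :=
  le_of_tendsto_of_tendsto' hxz (hxy.add hyz) fun n => by
    rw [← add_div]
    exact div_le_div_of_nonneg_right (dist_triangle _ _ _) (hr n)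

theorem isCliqueSet_setOf_seqEquiv (p : X) (hr : ∀ n, 0 ≤ r n) {S : Set (ℕ → X)}
    (hS : ∀ x ∈ S, ∀ y ∈ S, MutStable dist r x y) :
    IsCliqueSet dist p r {z | SeqAdm dist p r z ∧ ∃ x ∈ S, SeqEquiv dist r z x} := by
  refine ⟨fun z hz => hz.1, ?_, ?_⟩
  · rintro z ⟨-, x, hx, hzx⟩ y hy hzy
    exact ⟨hy, x, hx, hzy.symm.trans hr hzx⟩
  · rintro z ⟨-, x, hx, hzx⟩ u ⟨-, y, hy, huy⟩
    exact (hS x hx y hy).of_seqEquiv hr hzx.symm huy.symm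

theorem exists_isPretangent_of_mutStable {p : X} (hr : ∀ n, 0 ≤ r n) {x y : ℕ → X}
    (hx : SeqAdm dist p r x) (hy : SeqAdm dist p r y)
    (hxy : MutStable dist r x y) : ∃ C, IsPretangent dist p r C ∧ x ∈ C ∧ y ∈ C := by
  have hpair : ∀ u ∈ ({x, y} : Set (ℕ → X)), ∀ v ∈ ({x, y} : Set (ℕ → X)),
      MutStable dist r u v := by
    rintro u (rfl | rfl) v (rfl | rfl)
    exacts [.refl _, hxy, hxy.symm, .refl _]
  obtain ⟨C, hC, hsub⟩ := (isCliqueSet_setOf_seqEquiv p hr hpair).exists_isPretangent_superset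
  exact ⟨C, hC, hsub ⟨hx, x, by simp, .refl x⟩, hsub ⟨hy, y, by simp, .refl y⟩⟩

theorem IsCliqueSet.exists_tendsto_gt {p : X} {C : Set (ℕ → X)} (hC : IsCliqueSet dist p r C)
    (hr : ∀ n, 0 ≤ r n) (hunb : ∀ M, ∃ x ∈ C, ∃ y ∈ C, M < seqDist dist r x y) (t : ℝ) :
    ∃ x ∈ C, ∃ L, Tendsto (fun n => dist (x n) p / r n) atTop (𝓝 L) ∧ t < L := by
  obtain ⟨x, hx, y, hy, hgt⟩ := hunb (2 * t)
  obtain ⟨L, hL⟩ := hC.2.2 x hx y hy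
  obtain ⟨a, ha⟩ := (hC.1 x hx).2
  obtain ⟨b, hb⟩ := (hC.1 y hy).2
  rw [seqDist, hL.limUnder_eq] at hgt
  have hLab : L ≤ a + b :=
    le_add_of_tendsto_dist_div hr ha (by simpa only [dist_comm] using hb) hL
  by_cases hta : t < a
  · exact ⟨x, hx, a, ha, hta⟩
  · exact ⟨y, hy, b, hb, by linarith⟩

theorem exists_strictMono_normalScaling {x : ℕ → X} {p : X}
    (hx : Tendsto (fun n => dist (x n) p) atTop atTop) :
    ∃ φ : ℕ → ℕ, StrictMono φ ∧ NormalScaling dist p fun n => dist (x (φ n)) p := by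
  obtain ⟨φ, hφ, hrecord⟩ := extraction_of_frequently_atTop
    ((frequently_high_scores hx).and_eventually (hx.eventually_gt_atTop 0))
  have hs : Tendsto (fun n => dist (x (φ n)) p) atTop atTop := hx.comp hφ.tendsto_atTop
  have hone : Tendsto (fun n => dist (x (φ n)) p / dist (x (φ n)) p) atTop (𝓝 1) :=
    tendsto_const_nhds.congr fun n => (div_self (hrecord n).2.ne').symm
  refine ⟨φ, hφ, ⟨fun n => (hrecord n).2, hs⟩, ⟨0, fun n _ => ?_⟩, _, ⟨hs, 1, hone⟩, hone⟩
  exact ((hrecord (n + 1)).1 _ (hφ n.lt_succ_self)).le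

end

theorem bounded_pretangent_of_uniformly_bounded_general {X : Type*} [MetricSpace X] (p : X)
    (hub : ∃ M : ℝ, ∀ r : ℕ → ℝ, NormalScaling dist p r →
      ∀ C : Set (ℕ → X), IsPretangent dist p r C →
        ∀ x ∈ C, ∀ y ∈ C, seqDist dist r x y ≤ M) :
    ∀ r : ℕ → ℝ, ScalingSeq r → ∀ C : Set (ℕ → X), IsPretangent dist p r C →
      ∃ M : ℝ, ∀ x ∈ C, ∀ y ∈ C, seqDist dist r x y ≤ M := by
  obtain ⟨M, hM⟩ := hub
  intro r hr C hC
  by_contra! hunb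
  have hr0 : ∀ n, 0 ≤ r n := fun n => (hr.1 n).le
  obtain ⟨x, hx, a, ha, ha0⟩ := hC.1.exists_tendsto_gt hr0 hunb 0
  obtain ⟨w, hw, b, hb, hab⟩ := hC.1.exists_tendsto_gt hr0 hunb (a * (M + 1))
  obtain ⟨c, hc⟩ := hC.1.2.2 x hx w hw
  have hbc : b ≤ c + a :=
    le_add_of_tendsto_dist_div hr0 (by simpa only [dist_comm] using hc) ha hb
  have hMc : M < c / a := by
    rw [lt_div_iff₀ ha0]
    linarith
  obtain ⟨φ, hφ, hs⟩ := exists_strictMono_normalScaling (hC.1.1 x hx).1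
  have rescale : ∀ {f : ℕ → ℝ} {L : ℝ}, Tendsto (fun n => f n / r n) atTop (𝓝 L) →
      Tendsto (fun n => f (φ n) / dist (x (φ n)) p) atTop (𝓝 (L / a)) := fun hf =>
    (tendsto_div_of_tendsto_div_same_denom (.of_forall fun n => (hr.1 n).ne') hf ha
      ha0.ne').comp hφ.tendsto_atTop
  have hadm : ∀ y ∈ C, SeqAdm dist p (fun n => dist (x (φ n)) p) fun n => y (φ n) :=
    fun y hy => ⟨(hC.1.1 y hy).1.comp hφ.tendsto_atTop, _, rescale (hC.1.1 y hy).2.choose_spec⟩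
  obtain ⟨D, hD, hxD, hwD⟩ := exists_isPretangent_of_mutStable (fun n => (hs.1.1 n).le)
    (hadm x hx) (hadm w hw) ⟨_, rescale hc⟩
  have hbound := hM _ hs D hD _ hxD _ hwD
  rw [seqDist, (rescale hc).limUnder_eq] at hbound
  linarith

/-- If the family `𝔉ₙ(X)` of all pretangent spaces with normal
scaling sequences is uniformly bounded, then every pretangent space `Ω^X_{∞,r̃}` (for
an arbitrary scaling sequence `r̃`) is bounded. -/
theorem bounded_pretangent_of_uniformly_bounded {X : Type*} [MetricSpace X]
    (hX : ¬ Bornology.IsBounded (Set.univ : Set X)) (p : X)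
    (hub : ∃ M : ℝ, ∀ r : ℕ → ℝ, NormalScaling dist p r →
      ∀ C : Set (ℕ → X), IsPretangent dist p r C →
        ∀ x ∈ C, ∀ y ∈ C, seqDist dist r x y ≤ M) :
    ∀ r : ℕ → ℝ, ScalingSeq r → ∀ C : Set (ℕ → X), IsPretangent dist p r C →
      ∃ M : ℝ, ∀ x ∈ C, ∀ y ∈ C, seqDist dist r x y ≤ M :=
  bounded_pretangent_of_uniformly_bounded_general p hub
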